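/- Let U: [0,T] × ℂ → ℂ be such that for each t, U(t,·) is complex differentiable (holomorphic), and suppose U satisfies the first-order PDE ∂U/∂t(t,x) = -[g̃(t,x) + α(t)U(t,x) + β(t)σ(t)U_x(t,x) + θ(t)γ(t)U_x(t,x)] with terminal condition U(T,x) = h(x), where g̃(t,·) and h are holomorphic and α, β, θ, σ, γ are continuous complex-valued functions of t. If V is another such solution, then U = V (uniqueness of classical solutions among functions holomorphic in x). -/

import Mathlib

open Set Metric Filter Topology Asymptotics

/-!
The difference `W = U - V` solves the homogeneous transport equation `W_t + α W + c W_x = 0`,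
`c = βσ + θγ`, with `W(T) = 0`. Along a characteristic `y' = c` the quantity
`W(u, y u) · exp (∫_τ^u α)` is constant, so if `W(τ) = 0` then `W(s)` vanishes on a ball, hence
everywhere by the identity theorem, as long as the characteristics reaching that ball stay where
`W_x` is jointly continuous in `(t, x)`. Such a region exists: by Baire category `W` is bounded on
some ball uniformly in time, and Cauchy estimates then make `W` and `W_x` Lipschitz in time on a
smaller ball. The admissible step `τ - s` depends only on that ball and a bound for `c`, so finitely
many steps reach `t = 0`.
-/

theorem Complex.norm_deriv_le_of_forall_mem_closedBall_norm_le {F : Type*} [NormedAddCommGroup F]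
    [NormedSpace ℂ F] {f : ℂ → F} (hf : Differentiable ℂ f) {z x : ℂ} {R r C : ℝ} (hr : 0 < r)
    (hC : ∀ w ∈ closedBall z (R + r), ‖f w‖ ≤ C) (hx : x ∈ closedBall z R) :
    ‖deriv f x‖ ≤ C / r :=
  norm_deriv_le_of_forall_mem_sphere_norm_le hr hf.diffContOnCl fun w hw => hC w <| by
    rw [mem_sphere] at hw
    rw [mem_closedBall] at hx ⊢
    linarith [dist_triangle w x z]

theorem exists_isOpen_forall_norm_le_of_continuousOn {S X E : Type*} [TopologicalSpace S]
    [TopologicalSpace X] [BaireSpace X] [Nonempty X] [NormedAddCommGroup E] {K : Set S}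
    (hK : IsCompact K) {f : S → X → E} (hfx : ∀ s ∈ K, Continuous (f s))
    (hfs : ∀ x, ContinuousOn (f · x) K) :
    ∃ U : Set X, IsOpen U ∧ U.Nonempty ∧ ∃ C, ∀ s ∈ K, ∀ x ∈ U, ‖f s x‖ ≤ C := by
  obtain ⟨n, hn⟩ : ∃ n : ℕ, (interior {x | ∀ s ∈ K, ‖f s x‖ ≤ n}).Nonempty := by
    refine nonempty_interior_of_iUnion_of_closed (fun n => ?_) (eq_univ_of_forall fun x => ?_)
    · simpa only [ofPred_forall] using
        isClosed_biInter fun s hs => isClosed_le (hfx s hs).norm continuous_const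
    · obtain ⟨C, hC⟩ := hK.exists_bound_of_continuousOn (hfs x)
      exact mem_iUnion.2 ⟨⌈C⌉₊, fun s hs => (hC s hs).trans (Nat.le_ceil C)⟩
  exact ⟨_, isOpen_interior, hn, n, fun s hs x hx => interior_subset hx s hs⟩

theorem continuousOn_deriv_of_dist_le_mul {α : Type*} [PseudoMetricSpace α] {F : α → ℂ → ℂ}
    {S : Set α} {z : ℂ} {R r L : ℝ} (hr : 0 < r) (hF : ∀ s ∈ S, Differentiable ℂ (F s))
    (hL : ∀ x ∈ closedBall z (R + r), ∀ s ∈ S, ∀ s' ∈ S, dist (F s x) (F s' x) ≤ L * dist s s') :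
    ContinuousOn (fun p : α × ℂ => deriv (F p.1) p.2) (S ×ˢ closedBall z R) := by
  refine continuousOn_prod_of_continuousOn_lipschitzOnWith _ (L / r).toNNReal
    (fun s hs => ((hF s hs).contDiff (n := 1)).continuous_deriv le_rfl |>.continuousOn)
    fun x hx => LipschitzOnWith.of_dist_le' fun s hs s' hs' => ?_
  rw [dist_eq_norm, ← deriv_sub (hF s hs x) (hF s' hs' x), div_mul_eq_mul_div]
  exact Complex.norm_deriv_le_of_forall_mem_closedBall_norm_le ((hF s hs).sub (hF s' hs')) hr
    (fun w hw => by simpa [dist_eq_norm] using hL w hw s hs s' hs') hx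

theorem hasDerivWithinAt_comp_of_continuousWithinAt_deriv {F : ℝ → ℂ → ℂ} {y : ℝ → ℂ}
    {s : Set ℝ} {B : Set ℂ} {t : ℝ} {a b : ℂ} (ht : t ∈ s) (hB : Convex ℝ B)
    (hyB : ∀ u ∈ s, y u ∈ B) (hF : ∀ u ∈ s, Differentiable ℂ (F u))
    (hD : ContinuousWithinAt (fun p : ℝ × ℂ => deriv (F p.1) p.2) (s ×ˢ B) (t, y t))
    (hFt : HasDerivWithinAt (fun u => F u (y t)) a s t) (hy : HasDerivWithinAt y b s t) :
    HasDerivWithinAt (fun u => F u (y u)) (a + deriv (F t) (y t) * b) s t := by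
  set D₀ := deriv (F t) (y t)
  have hspace : (fun u => F u (y u) - F u (y t) - D₀ * (y u - y t)) =o[𝓝[s] t]
      fun u => y u - y t := by
    refine isLittleO_iff.2 fun ε hε => ?_
    have hnear : ∀ᶠ p in 𝓝[s] t ×ˢ 𝓝[B] (y t), ‖deriv (F p.1) p.2 - D₀‖ ≤ ε := by
      rw [← nhdsWithin_prod_eq]
      exact hD.eventually (closedBall_mem_nhds _ hε) |>.mono fun p hp => by
        rwa [dist_eq_norm] at hp
    have hseg : ∀ᶠ u in 𝓝[s] t, segment ℝ (y t) (y u) ⊆ B :=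
      eventually_nhdsWithin_of_forall fun u hu => hB.segment_subset (hyB t ht) (hyB u hu)
    filter_upwards [hnear.segment_of_prod_nhdsWithin (r := fun u ζ => ‖deriv (F u) ζ - D₀‖ ≤ ε)
      tendsto_const_nhds hy.continuousWithinAt hseg,
      self_mem_nhdsWithin] with u hu hus
    have hmvt := (convex_segment (y t) (y u)).norm_image_sub_le_of_norm_deriv_le
      (f := fun ζ => F u ζ - D₀ * ζ) (fun ζ _ => (hF u hus ζ).sub (differentiableAt_id.const_mul _))
      (fun ζ hζ => by
        rw [((hF u hus ζ).hasDerivAt.fun_sub ((hasDerivAt_id' ζ).const_mul D₀)).deriv, mul_one]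
        exact hu ζ hζ)
      (left_mem_segment ℝ _ _) (right_mem_segment ℝ _ _)
    calc ‖F u (y u) - F u (y t) - D₀ * (y u - y t)‖
        = ‖F u (y u) - D₀ * y u - (F u (y t) - D₀ * y t)‖ := by congr 1; ring
      _ ≤ ε * ‖y u - y t‖ := hmvt
  have hG : HasDerivWithinAt (fun u => F u (y u) - F u (y t)) (D₀ * b) s t := by
    refine HasDerivWithinAt.of_isLittleO ?_
    have hlin := (hasDerivWithinAt_iff_isLittleO.1 hy).const_mul_left D₀
    refine ((hspace.trans_isBigO hy.hasFDerivWithinAt.isBigO_sub).add hlin).congr_left fun u => ?_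
    simp only [sub_self, sub_zero, Complex.real_smul]
    ring
  simpa only [add_sub_cancel] using hFt.fun_add hG

def IsTransportSolution (α c : ℝ → ℂ) (a b : ℝ) (W : ℝ → ℂ → ℂ) : Prop :=
  ∀ t ∈ Icc a b, ∀ x, HasDerivAt (fun s => W s x) (-(α t * W t x + c t * deriv (W t) x)) t

section TransportEquation

variable {a b : ℝ} {α c : ℝ → ℂ} {W : ℝ → ℂ → ℂ}

theorem exists_continuousOn_deriv_of_transport (hα : ContinuousOn α (Icc a b))
    (hc : ContinuousOn c (Icc a b)) (hW : ∀ t, Differentiable ℂ (W t))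
    (hW_pde : IsTransportSolution α c a b W) :
    ∃ z : ℂ, ∃ r > 0,
      ContinuousOn (fun p : ℝ × ℂ => deriv (W p.1) p.2) (Icc a b ×ˢ closedBall z r) := by
  obtain ⟨U, hUo, ⟨z, hz⟩, C, hC⟩ := exists_isOpen_forall_norm_le_of_continuousOn isCompact_Icc
    (fun s _ => (hW s).continuous) fun x s hs => (hW_pde s hs x).continuousAt.continuousWithinAt
  obtain ⟨ρ, hρ, hρU⟩ := Metric.isOpen_iff.1 hUo z hz
  obtain ⟨r, hr, hrρ⟩ : ∃ r > 0, r + r + r < ρ := ⟨ρ / 4, by positivity, by linarith⟩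
  have hWC : ∀ s ∈ Icc a b, ∀ x ∈ closedBall z (r + r + r), ‖W s x‖ ≤ C :=
    fun s hs x hx => hC s hs x (hρU (closedBall_subset_ball (by linarith) hx))
  obtain ⟨Cα, hCα⟩ := isCompact_Icc.exists_bound_of_continuousOn hα
  obtain ⟨Cc, hCc⟩ := isCompact_Icc.exists_bound_of_continuousOn hc
  have hlip : ∀ x ∈ closedBall z (r + r), ∀ s ∈ Icc a b, ∀ s' ∈ Icc a b,
      dist (W s x) (W s' x) ≤ (Cα * C + Cc * (C / r)) * dist s s' := by
    intro x hx s hs s' hs'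
    rw [dist_eq_norm, dist_eq_norm]
    refine (convex_Icc a b).norm_image_sub_le_of_norm_hasDerivWithin_le
      (fun u hu => (hW_pde u hu x).hasDerivWithinAt) (fun u hu => ?_) hs' hs
    have hWx := Complex.norm_deriv_le_of_forall_mem_closedBall_norm_le (hW u) hr (hWC u hu) hx
    have hWu := hWC u hu x (closedBall_subset_closedBall (by linarith) hx)
    rw [norm_neg]
    refine norm_add_le_of_le ((norm_mul_le _ _).trans ?_) ((norm_mul_le _ _).trans ?_)
    · exact mul_le_mul (hCα u hu) hWu (norm_nonneg _) ((norm_nonneg _).trans (hCα u hu))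
    · exact mul_le_mul (hCc u hu) hWx (norm_nonneg _) ((norm_nonneg _).trans (hCc u hu))
  exact ⟨z, r, hr, continuousOn_deriv_of_dist_le_mul hr (fun s _ => hW s) hlip⟩

theorem mul_exp_integral_eq_of_hasDerivAt_characteristic (hα : Continuous α)
    (hW : ∀ t, Differentiable ℂ (W t))
    (hW_pde : IsTransportSolution α c a b W)
    {B : Set ℂ} (hB : Convex ℝ B)
    (hD : ContinuousOn (fun p : ℝ × ℂ => deriv (W p.1) p.2) (Icc a b ×ˢ B))
    {s τ : ℝ} (hsτ : s ≤ τ) (hsub : Icc s τ ⊆ Icc a b) {y : ℝ → ℂ}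
    (hy : ∀ u, HasDerivAt y (c u) u) (hyB : ∀ u ∈ Icc s τ, y u ∈ B) :
    W s (y s) * Complex.exp (∫ v in τ..s, α v) = W τ (y τ) := by
  set ψ : ℝ → ℂ := fun u => W u (y u) * Complex.exp (∫ v in τ..u, α v)
  have hψ : ∀ u ∈ Icc s τ, HasDerivWithinAt ψ 0 (Icc s τ) u := by
    intro u hu
    have hWy := hasDerivWithinAt_comp_of_continuousWithinAt_deriv hu hB hyB (fun u _ => hW u)
      (hD.mono (prod_mono hsub subset_rfl) _ ⟨hu, hyB u hu⟩)
      (hW_pde u (hsub hu) (y u)).hasDerivWithinAt (hy u).hasDerivWithinAt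
    have hexp := ((hα.integral_hasStrictDerivAt τ u).hasDerivAt.cexp).hasDerivWithinAt
      (s := Icc s τ)
    exact (hWy.fun_mul hexp).congr_deriv (by ring)
  have hψc : ContinuousOn ψ (Icc s τ) := fun u hu => (hψ u hu).continuousWithinAt
  have hconst := constant_of_has_deriv_right_zero hψc (fun u hu =>
    (hψ u (Ico_subset_Icc_self hu)).mono_of_mem_nhdsWithin (Icc_mem_nhdsGE_of_mem hu)) τ
    (right_mem_Icc.2 hsτ)
  simpa [ψ] using hconst.symm

theorem eq_zero_of_eq_zero_of_transport (hα : Continuous α) (hc : Continuous c)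
    (hW : ∀ t, Differentiable ℂ (W t))
    (hW_pde : IsTransportSolution α c a b W)
    {z : ℂ} {r Cc : ℝ} (hr : 0 < r)
    (hD : ContinuousOn (fun p : ℝ × ℂ => deriv (W p.1) p.2) (Icc a b ×ˢ closedBall z r))
    (hCc : ∀ u ∈ Icc a b, ‖c u‖ ≤ Cc) {s τ : ℝ} (has : a ≤ s) (hsτ : s ≤ τ) (hτb : τ ≤ b)
    (hstep : Cc * (τ - s) ≤ r / 2) (hWτ : W τ = 0) : W s = 0 := by
  have hsub : Icc s τ ⊆ Icc a b := Icc_subset_Icc has hτb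
  set I := ∫ v in τ..s, c v
  have hball : ∀ x ∈ ball z (r / 2), W s (x + I) = 0 := by
    intro x hx
    have hyB : ∀ u ∈ Icc s τ, x + ∫ v in τ..u, c v ∈ closedBall z r := by
      intro u hu
      have hint : ‖∫ v in τ..u, c v‖ ≤ Cc * |u - τ| :=
        intervalIntegral.norm_integral_le_of_norm_le_const fun v hv =>
          hCc v (hsub (uIoc_subset_uIcc.trans (uIcc_subset_Icc (right_mem_Icc.2 hsτ) hu) hv))
      have hCc0 : 0 ≤ Cc := (norm_nonneg _).trans (hCc s (hsub (left_mem_Icc.2 hsτ)))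
      have hu' : |u - τ| ≤ τ - s := by rw [abs_sub_comm, abs_of_nonneg] <;> linarith [hu.1, hu.2]
      rw [mem_ball] at hx
      calc dist (x + ∫ v in τ..u, c v) z
          ≤ dist (x + ∫ v in τ..u, c v) x + dist x z := dist_triangle _ _ _
        _ = ‖∫ v in τ..u, c v‖ + dist x z := by rw [dist_self_add_left]
        _ ≤ r := by nlinarith [mul_le_mul_of_nonneg_left hu' hCc0]
    have hchar := mul_exp_integral_eq_of_hasDerivAt_characteristic hα hW hW_pde
      (convex_closedBall z r) hD hsτ hsub
      (fun u => ((hc.integral_hasStrictDerivAt τ u).hasDerivAt.const_add x)) hyB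
    simpa [hWτ, I] using hchar
  have hzero : W s =ᶠ[𝓝 (z + I)] 0 := by
    filter_upwards [ball_mem_nhds (z + I) (half_pos hr)] with w hw
    simpa using hball (w - I) (by rwa [mem_ball, dist_sub_eq_dist_add_left])
  have hanalytic := Complex.analyticOnNhd_univ_iff_differentiable.2 (hW s)
  funext x
  exact hanalytic.eqOn_zero_of_preconnected_of_eventuallyEq_zero isPreconnected_univ
    (mem_univ _) hzero (mem_univ x)

theorem eq_zero_of_transport (hα : Continuous α) (hc : Continuous c)
    (hW : ∀ t, Differentiable ℂ (W t))
    (hW_pde : IsTransportSolution α c a b W)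
    (hWb : W b = 0) : ∀ t ∈ Icc a b, W t = 0 := by
  intro t ht
  obtain ⟨z, r, hr, hD⟩ :=
    exists_continuousOn_deriv_of_transport hα.continuousOn hc.continuousOn hW hW_pde
  obtain ⟨Cc, hCc⟩ := isCompact_Icc.exists_bound_of_continuousOn (hc.continuousOn (s := Icc a b))
  have hCc0 : 0 ≤ Cc := (norm_nonneg _).trans (hCc t ht)
  -- each backward step of length `δ` keeps the characteristics inside `closedBall z r`
  set δ := r / (2 * (Cc + 1))
  have hδ : 0 < δ := by positivity
  have hCcδ : Cc * δ ≤ r / 2 := by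
    rw [mul_div_assoc', div_le_div_iff₀ (by positivity) two_pos]
    nlinarith
  have hsteps : ∀ n : ℕ, ∀ s ∈ Icc a b, b - n * δ ≤ s → W s = 0 := by
    intro n
    induction n with
    | zero =>
      intro s hs hbs
      rw [le_antisymm hs.2 (by simpa using hbs)]
      exact hWb
    | succ n ih =>
      intro s hs hbs
      rcases le_or_gt (b - n * δ) s with hle | hlt
      · exact ih s hs hle
      · have hnδ : 0 ≤ n * δ := by positivity
        push_cast at hbs
        refine eq_zero_of_eq_zero_of_transport hα hc hW hW_pde hr hD hCc hs.1 hlt.le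
          (by linarith) ?_ (ih _ ⟨by linarith [hs.1], by linarith⟩ le_rfl)
        nlinarith
  obtain ⟨n, hn⟩ := exists_nat_ge ((b - a) / δ)
  exact hsteps n t ht (by rw [div_le_iff₀ hδ] at hn; linarith [ht.1])

end TransportEquation

theorem complex_pde_uniqueness_general
    (T : ℝ)
    (gt : ℝ → ℂ → ℂ) (h : ℂ → ℂ) (α β θ σ γ : ℝ → ℂ)
    (hα : Continuous α) (hβ : Continuous β) (hθ : Continuous θ)
    (hσ : Continuous σ) (hγ : Continuous γ)
    (U V : ℝ → ℂ → ℂ)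
    (hU_hol : ∀ t, Differentiable ℂ (U t))
    (hV_hol : ∀ t, Differentiable ℂ (V t))
    (hU_pde : ∀ t ∈ Set.Icc 0 T, ∀ x : ℂ,
      HasDerivAt (fun s => U s x)
        (-(gt t x + α t * U t x + β t * (σ t * deriv (U t) x) + θ t * (γ t * deriv (U t) x))) t)
    (hV_pde : ∀ t ∈ Set.Icc 0 T, ∀ x : ℂ,
      HasDerivAt (fun s => V s x)
        (-(gt t x + α t * V t x + β t * (σ t * deriv (V t) x) + θ t * (γ t * deriv (V t) x))) t)
    (hU_term : ∀ x, U T x = h x) (hV_term : ∀ x, V T x = h x) :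
    ∀ t ∈ Set.Icc 0 T, ∀ x : ℂ, U t x = V t x := by
  have hdiff : ∀ t ∈ Icc 0 T, U t - V t = 0 := by
    refine eq_zero_of_transport (W := U - V) (c := fun t => β t * σ t + θ t * γ t) hα
      ((hβ.mul hσ).add (hθ.mul hγ)) (fun t => (hU_hol t).sub (hV_hol t)) (fun t ht x => ?_)
      (funext fun x => by simp [hU_term, hV_term])
    rw [Pi.sub_apply, deriv_sub (hU_hol t x) (hV_hol t x), Pi.sub_apply]
    exact ((hU_pde t ht x).sub (hV_pde t ht x)).congr_deriv (by ring)
  exact fun t ht x => sub_eq_zero.1 (congrFun (hdiff t ht) x)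

theorem complex_pde_uniqueness
    (T : ℝ) (hT : 0 < T)
    (gt : ℝ → ℂ → ℂ) (h : ℂ → ℂ) (α β θ σ γ : ℝ → ℂ)
    (hgt_cont : Continuous fun p : ℝ × ℂ => gt p.1 p.2)
    (hgt_hol : ∀ t, Differentiable ℂ (gt t))
    (hh : Differentiable ℂ h)
    (hα : Continuous α) (hβ : Continuous β) (hθ : Continuous θ)
    (hσ : Continuous σ) (hγ : Continuous γ)
    (U V : ℝ → ℂ → ℂ)
    (hU_hol : ∀ t, Differentiable ℂ (U t))
    (hV_hol : ∀ t, Differentiable ℂ (V t))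
    (hU_pde : ∀ t ∈ Set.Icc 0 T, ∀ x : ℂ,
      HasDerivAt (fun s => U s x)
        (-(gt t x + α t * U t x + β t * (σ t * deriv (U t) x) + θ t * (γ t * deriv (U t) x))) t)
    (hV_pde : ∀ t ∈ Set.Icc 0 T, ∀ x : ℂ,
      HasDerivAt (fun s => V s x)
        (-(gt t x + α t * V t x + β t * (σ t * deriv (V t) x) + θ t * (γ t * deriv (V t) x))) t)
    (hU_term : ∀ x, U T x = h x) (hV_term : ∀ x, V T x = h x) :
    ∀ t ∈ Set.Icc 0 T, ∀ x : ℂ, U t x = V t x :=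
  complex_pde_uniqueness_general T gt h α β θ σ γ hα hβ hθ hσ hγ U V hU_hol hV_hol hU_pde hV_pde
    hU_term hV_term
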